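/- arXiv:2508.14324 — 2 statements merged into one kernel-verified Lean document; each statement's English description precedes it below -/
import Mathlib

section
/- Let G = (V,E) be a finite simple graph on n vertices with maximum degree at most d, let k be a natural number, let φ > 0, and let E_cut ⊆ E with |E_cut| ≤ φ·n. Let G' = (V, E \ E_cut). Then the ℓ1-distance between the k-disc frequency vectors satisfies ‖f_G − f_{G'}‖₁ ≤ 2·φ·B(d,k), where B(d,k) = 2·∑_{i=0}^{k} d^i. Consequently, if φ·B(d,k) ≤ ε/2 then ‖f_G − f_{G'}‖₁ ≤ ε. -/
/-!
Deleting the edges of `Ecut` leaves the `k`-disc of `v` unchanged unless the `k`-ball around `v`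
contains an endpoint of a deleted edge. With maximum degree `d` a `k`-ball has at most
`∑_{i ≤ k} d^i` vertices, so at most `|Ecut| · B(d,k) ≤ φ n B(d,k)` vertices change their disc
type. Each of them moves mass `1/n` from one type to another, costing at most `2/n` in `ℓ₁`.
-/

open SimpleGraph

/-- The ball of radius `k` around `v`: vertices at graph distance at most `k` from `v`. -/
def ball {V : Type*} (G : SimpleGraph V) (k : ℕ) (v : V) : Set V :=
  {w : V | G.edist v w ≤ k}

theorem root_mem_ball {V : Type*} (G : SimpleGraph V) (k : ℕ) (v : V) :
    v ∈ ball G k v := by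
  simp [_root_.ball, SimpleGraph.edist_self]

/-- The `k`-disc of `v` in `G` is rooted-isomorphic to the `k`-disc of `w` in `H`. -/
def DiscIso {V W : Type*} (G : SimpleGraph V) (H : SimpleGraph W) (k : ℕ)
    (v : V) (w : W) : Prop :=
  ∃ φ : ball G k v ≃ ball H k w,
    (∀ a b : ball G k v, G.Adj a b ↔ H.Adj (φ a) (φ b)) ∧
      φ ⟨v, root_mem_ball G k v⟩ = ⟨w, root_mem_ball H k w⟩

theorem DiscIso.refl {V : Type*} (G : SimpleGraph V) (k : ℕ) (v : V) :
    DiscIso G G k v v :=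
  ⟨Equiv.refl _, fun _ _ => Iff.rfl, rfl⟩

theorem DiscIso.symm {V W : Type*} {G : SimpleGraph V} {H : SimpleGraph W} {k : ℕ}
    {v : V} {w : W} (h : DiscIso G H k v w) : DiscIso H G k w v := by
  obtain ⟨φ, hadj, hroot⟩ := h
  refine ⟨φ.symm, fun a b => ?_, ?_⟩
  · have := hadj (φ.symm a) (φ.symm b)
    rw [Equiv.apply_symm_apply, Equiv.apply_symm_apply] at this
    exact this.symm
  · rw [← hroot, Equiv.symm_apply_apply]

theorem DiscIso.trans {U V W : Type*} {F : SimpleGraph U} {G : SimpleGraph V}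
    {H : SimpleGraph W} {k : ℕ} {u : U} {v : V} {w : W}
    (h₁ : DiscIso F G k u v) (h₂ : DiscIso G H k v w) : DiscIso F H k u w := by
  obtain ⟨φ, hφ, rφ⟩ := h₁
  obtain ⟨ψ, hψ, rψ⟩ := h₂
  exact ⟨φ.trans ψ, fun a b => (hφ a b).trans (hψ (φ a) (φ b)),
    by simp [Equiv.trans_apply, rφ, rψ]⟩

/-- The equivalence relation "having rooted-isomorphic `k`-discs" on the disjoint union
of the vertex sets of `G` and `H` (vertices on the left take their disc in `G`,
vertices on the right in `H`). -/
def discSetoid {V W : Type*} (G : SimpleGraph V) (H : SimpleGraph W) (k : ℕ) :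
    Setoid (V ⊕ W) where
  r x y :=
    match x, y with
    | .inl a, .inl b => DiscIso G G k a b
    | .inl a, .inr b => DiscIso G H k a b
    | .inr a, .inl b => DiscIso H G k a b
    | .inr a, .inr b => DiscIso H H k a b
  iseqv := by
    refine ⟨?_, ?_, ?_⟩
    · rintro (a | a) <;> exact DiscIso.refl _ _ _
    · rintro (a | a) (b | b) h <;> exact h.symm
    · rintro (a | a) (b | b) (c | c) h₁ h₂ <;> exact h₁.trans h₂

/-- The `ℓ₁`-distance between the `k`-disc frequency vectors of the finite graphs
`G` and `H`: the sum, over all rooted-isomorphism types `c` of `k`-discs occurring in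
`G` or `H`, of the absolute difference of the fractions of vertices of `G`
(respectively of `H`) whose `k`-disc has type `c`. -/
noncomputable def freqL1 {V W : Type*} [Fintype V] [Fintype W]
    (G : SimpleGraph V) (H : SimpleGraph W) (k : ℕ) : ℝ :=
  ∑ᶠ c : Quotient (discSetoid G H k),
    |({a : V | Quotient.mk (discSetoid G H k) (Sum.inl a) = c}.ncard : ℝ) /
        (Fintype.card V : ℝ) -
      ({b : W | Quotient.mk (discSetoid G H k) (Sum.inr b) = c}.ncard : ℝ) /
        (Fintype.card W : ℝ)|

/-- `B d k = 2 * ∑_{i=0}^{k} d^i`. -/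
def B (d k : ℕ) : ℕ := 2 * ∑ i ∈ Finset.range (k + 1), d ^ i

open Finset

section Balls

variable {V : Type*} (G : SimpleGraph V) {k : ℕ} {v w : V}

theorem mem_ball_iff_exists_walk : w ∈ ball G k v ↔ ∃ p : G.Walk v w, p.length ≤ k := by
  refine ⟨fun hw => ?_, fun ⟨p, hp⟩ => (G.edist_le p).trans (by exact_mod_cast hp)⟩
  have hne : G.edist v w ≠ ⊤ := ne_top_of_le_ne_top (ENat.natCast_ne_top k) hw
  obtain ⟨p, hp⟩ := G.exists_walk_of_edist_ne_top hne
  exact ⟨p, by exact_mod_cast hp.le.trans hw⟩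

theorem ball_succ_subset : ball G (k + 1) v ⊆ insert v (⋃ u ∈ G.neighborSet v, ball G k u) := by
  intro w hw
  obtain ⟨p, hp⟩ := (mem_ball_iff_exists_walk G).1 hw
  cases p with
  | nil => exact Set.mem_insert _ _
  | cons hadj q =>
    refine Set.mem_insert_of_mem _ (Set.mem_biUnion hadj ?_)
    exact (mem_ball_iff_exists_walk G).2 ⟨q, by simpa using hp⟩

theorem ncard_ball_le [Fintype V] [DecidableRel G.Adj] {d : ℕ} (hdeg : ∀ v, G.degree v ≤ d)
    (k : ℕ) (v : V) : (ball G k v).ncard ≤ ∑ i ∈ range (k + 1), d ^ i := by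
  induction k generalizing v with
  | zero =>
    have hball : ball G 0 v = {v} := by
      ext w
      simp [_root_.ball, @eq_comm _ w]
    simp [hball]
  | succ k ih =>
    calc (ball G (k + 1) v).ncard
        ≤ (⋃ u ∈ G.neighborFinset v, ball G k u).ncard + 1 := by
          refine (Set.ncard_le_ncard (ball_succ_subset G) (Set.toFinite _)).trans ?_
          simpa using Set.ncard_insert_le v (⋃ u ∈ G.neighborSet v, ball G k u)
      _ ≤ ∑ u ∈ G.neighborFinset v, (ball G k u).ncard + 1 := by
          gcongr; exact set_ncard_biUnion_le _ _
      _ ≤ G.degree v * ∑ i ∈ range (k + 1), d ^ i + 1 := by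
          gcongr; exact sum_le_card_nsmul _ _ _ fun u _ => ih u
      _ ≤ d * ∑ i ∈ range (k + 1), d ^ i + 1 := by gcongr; exact hdeg v
      _ = ∑ i ∈ range (k + 2), d ^ i := geom_sum_succ.symm

end Balls

section DeleteEdges

variable {V : Type*} (G : SimpleGraph V) (s : Set (Sym2 V)) {k : ℕ} {v : V}

theorem ball_deleteEdges_eq (h : ∀ e ∈ s, ∀ u ∈ e, u ∉ ball G k v) :
    ball (G.deleteEdges s) k v = ball G k v := by
  refine subset_antisymm (fun w hw => (edist_anti (G.deleteEdges_le s)).trans hw)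
    fun w hw => ?_
  classical
  obtain ⟨p, hp⟩ := (mem_ball_iff_exists_walk G).1 hw
  have hsupport : ∀ x ∈ p.support, x ∈ ball G k v := fun x hx =>
    (mem_ball_iff_exists_walk G).2 ⟨p.takeUntil x hx, (p.length_takeUntil_le_length hx).trans hp⟩
  have hedges : ∀ e ∈ p.edges, e ∈ (G.deleteEdges s).edgeSet := by
    intro e he
    induction e with
    | h a b =>
      rw [edgeSet_deleteEdges]
      exact ⟨p.edges_subset_edgeSet he, fun hs =>
        h _ hs a (Sym2.mem_mk_left a b) (hsupport a (p.fst_mem_support_of_mem_edges he))⟩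
  exact (mem_ball_iff_exists_walk _).2 ⟨p.transfer _ hedges, by simpa using hp⟩

theorem discIso_deleteEdges_self (h : ∀ e ∈ s, ∀ u ∈ e, u ∉ ball G k v) :
    DiscIso G (G.deleteEdges s) k v v := by
  refine ⟨Equiv.setCongr (ball_deleteEdges_eq G s h).symm, fun a b => ?_, rfl⟩
  rw [Equiv.setCongr_apply, Equiv.setCongr_apply, deleteEdges_adj, iff_self_and]
  exact fun _ hs => h _ hs a (Sym2.mem_mk_left _ _) a.2

end DeleteEdges

theorem ncard_biUnion_ball_le {V : Type*} [Fintype V] (G : SimpleGraph V) [DecidableRel G.Adj]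
    {d : ℕ} (hdeg : ∀ v, G.degree v ≤ d) (k : ℕ) (s : Set (Sym2 V)) :
    (⋃ e ∈ s, ⋃ u ∈ e, ball G k u).ncard ≤ s.ncard * B d k := by
  have hedge : ∀ e : Sym2 V, (⋃ u ∈ e, ball G k u).ncard ≤ B d k := by
    refine Sym2.ind fun a b => ?_
    have hpair : ⋃ u ∈ s(a, b), ball G k u = ball G k a ∪ ball G k b := by
      simp [Sym2.mem_iff, Set.iUnion_or, Set.iUnion_union_distrib]
    rw [hpair, B, two_mul]
    exact (Set.ncard_union_le _ _).trans
      (add_le_add (ncard_ball_le G hdeg k a) (ncard_ball_le G hdeg k b))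
  classical
  calc (⋃ e ∈ s, ⋃ u ∈ e, ball G k u).ncard
      ≤ ∑ e ∈ s.toFinset, (⋃ u ∈ e, ball G k u).ncard := by
        simpa using set_ncard_biUnion_le s.toFinset fun e => ⋃ u ∈ e, ball G k u
    _ ≤ s.ncard * B d k := by
        rw [Set.ncard_eq_toFinset_card']
        exact sum_le_card_nsmul _ _ _ fun e _ => hedge e

theorem sum_abs_card_fiber_sub_le {α β : Type*} [Fintype α] [Fintype β] [DecidableEq β]
    (f g : α → β) (s : Finset α) (h : ∀ a ∉ s, f a = g a) :
    ∑ b, |(#{a | f a = b} : ℝ) - #{a | g a = b}| ≤ 2 * #s := by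
  have hfiber : ∀ b, (#{a | f a = b} : ℝ) - #{a | g a = b} =
      ∑ a ∈ s, ((if f a = b then 1 else 0) - (if g a = b then 1 else 0)) := by
    intro b
    rw [natCast_card_filter, natCast_card_filter, ← sum_sub_distrib]
    exact (sum_subset (subset_univ s) fun a _ ha => by simp [h a ha]).symm
  calc ∑ b, |(#{a | f a = b} : ℝ) - #{a | g a = b}|
      ≤ ∑ b, ∑ a ∈ s, ((if f a = b then 1 else 0) + (if g a = b then 1 else 0) : ℝ) := by
        refine sum_le_sum fun b _ => (hfiber b ▸ abs_sum_le_sum_abs _ _).trans ?_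
        refine sum_le_sum fun a _ => ?_
        split_ifs <;> norm_num
    _ = 2 * #s := by
        rw [sum_comm]
        simp [sum_add_distrib, two_mul]

theorem freqL1_le_of_discIso {V : Type*} [Fintype V] (G H : SimpleGraph V) (k : ℕ) (s : Set V)
    (h : ∀ v ∉ s, DiscIso G H k v v) :
    freqL1 G H k ≤ 2 * s.ncard / Fintype.card V := by
  classical
  let _ : Fintype (Quotient (discSetoid G H k)) := Fintype.ofFinite _
  rw [freqL1, finsum_eq_sum_of_fintype]
  simp_rw [div_sub_div_same, abs_div, Nat.abs_cast, ← sum_div, Set.ncard_eq_toFinset_card',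
    Set.toFinset_ofPred]
  gcongr
  exact sum_abs_card_fiber_sub_le _ _ _ fun v hv => Quotient.sound (h v (by simpa using hv))

theorem freqL1_deleteEdges_le_general
    {V : Type*} [Fintype V] [Nonempty V] (G : SimpleGraph V) [DecidableRel G.Adj]
    (d k : ℕ) (hdeg : ∀ v : V, G.degree v ≤ d)
    (φ : ℝ)
    (Ecut : Set (Sym2 V))
    (hcard : (Ecut.ncard : ℝ) ≤ φ * (Fintype.card V : ℝ)) :
    freqL1 G (G.deleteEdges Ecut) k ≤ 2 * φ * (B d k : ℝ) ∧
      ∀ ε : ℝ, φ * (B d k : ℝ) ≤ ε / 2 → freqL1 G (G.deleteEdges Ecut) k ≤ ε := by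
  set S := ⋃ e ∈ Ecut, ⋃ u ∈ e, ball G k u
  have hfar : ∀ v ∉ S, DiscIso G (G.deleteEdges Ecut) k v v := fun v hv =>
    discIso_deleteEdges_self G Ecut fun e he u hu hvu =>
      hv (Set.mem_biUnion he (Set.mem_biUnion hu (G.edist_comm.trans_le hvu)))
  have hS : (S.ncard : ℝ) ≤ Ecut.ncard * B d k := by
    exact_mod_cast ncard_biUnion_ball_le G hdeg k Ecut
  have hn : (0 : ℝ) < Fintype.card V := by exact_mod_cast Fintype.card_pos
  have hmain : freqL1 G (G.deleteEdges Ecut) k ≤ 2 * φ * B d k := by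
    refine (freqL1_le_of_discIso _ _ k S hfar).trans ?_
    rw [div_le_iff₀ hn]
    calc 2 * (S.ncard : ℝ) ≤ 2 * (Ecut.ncard * B d k) := by gcongr
      _ ≤ 2 * (φ * Fintype.card V * B d k) := by gcongr
      _ = 2 * φ * B d k * Fintype.card V := by ring
  exact ⟨hmain, fun ε hε => hmain.trans (by linarith)⟩

/-- Let `G` be a finite simple graph on `n` vertices of maximum degree
at most `d`, let `φ > 0`, and let `Ecut` be a set of at most `φ·n` edges of `G`.
Let `G' = G.deleteEdges Ecut`.  Then the `ℓ₁`-distance between the `k`-disc frequency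
vectors of `G` and `G'` is at most `2·φ·B(d,k)`; consequently, if `φ·B(d,k) ≤ ε/2`
then this distance is at most `ε`. -/
theorem freqL1_deleteEdges_le
    {V : Type*} [Fintype V] [Nonempty V] (G : SimpleGraph V) [DecidableRel G.Adj]
    (d k : ℕ) (hdeg : ∀ v : V, G.degree v ≤ d)
    (φ : ℝ) (hφ : 0 < φ)
    (Ecut : Set (Sym2 V)) (hE : Ecut ⊆ G.edgeSet)
    (hcard : (Ecut.ncard : ℝ) ≤ φ * (Fintype.card V : ℝ)) :
    freqL1 G (G.deleteEdges Ecut) k ≤ 2 * φ * (B d k : ℝ) ∧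
      ∀ ε : ℝ, φ * (B d k : ℝ) ≤ ε / 2 → freqL1 G (G.deleteEdges Ecut) k ≤ ε :=
  freqL1_deleteEdges_le_general G d k hdeg φ Ecut hcard
end

section
/- Let T and N be positive natural numbers, let ε ∈ (0,1), let η ∈ (0,1), let p be a probability vector on {1,…,T}, and let X_1,…,X_N be independent random variables each distributed according to p, with empirical distribution p̂. If N ≥ (2T²/ε²)·ln(2T/η), then P[ ∑_{i=1}^{T} |p̂_i − p_i| > ε/2 ] ≤ η. -/
/-!
The count of a symbol `i` among the samples is a sum of `N` independent indicators with mean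
`p i`, so by Hoeffding's inequality the frequency `p̂ i` deviates from `p i` by at least
`ε / (2T)` with probability at most `2 exp (-N ε² / (2T²))`. If `∑ |p̂ i - p i| > ε / 2`, some
coordinate deviates by more than `ε / (2T)`; a union bound over the `T` symbols and the lower
bound on `N` make the total at most `η`.
-/

open MeasureTheory ProbabilityTheory Real Finset

section Hoeffding

variable {Ω ι : Type*} [MeasurableSpace Ω] {μ : Measure Ω} [IsProbabilityMeasure μ]

lemma measureReal_le_abs_sum_sub_integral_le {Y : ι → Ω → ℝ} (hind : iIndepFun Y μ)
    (hmeas : ∀ i, Measurable (Y i)) (hY : ∀ i ω, Y i ω ∈ Set.Icc (0 : ℝ) 1) (s : Finset ι)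
    {t : ℝ} (ht : 0 ≤ t) :
    μ.real {ω | t ≤ |∑ i ∈ s, (Y i ω - μ[Y i])|} ≤ 2 * exp (-2 * t ^ 2 / #s) := by
  have hsubG : ∀ i, HasSubgaussianMGF (fun ω ↦ Y i ω - μ[Y i]) (1 / 4) μ := fun i ↦ by
    convert hasSubgaussianMGF_of_mem_Icc (hmeas i).aemeasurable (ae_of_all μ (hY i)) using 1
    norm_num
  have hind_centered : iIndepFun (fun i ω ↦ Y i ω - μ[Y i]) μ := by
    have h := hind.comp (γ := fun _ ↦ ℝ) (fun i y ↦ y - μ[Y i]) fun _ ↦ measurable_id.sub_const _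
    exact h
  have htail : ∀ {Z : ι → Ω → ℝ}, iIndepFun Z μ → (∀ i, HasSubgaussianMGF (Z i) (1 / 4) μ) →
      μ.real {ω | t ≤ ∑ i ∈ s, Z i ω} ≤ exp (-2 * t ^ 2 / #s) := fun hZ hZsubG ↦ by
    refine (HasSubgaussianMGF.measure_sum_ge_le_of_iIndepFun hZ (fun i _ ↦ hZsubG i) ht).trans_eq ?_
    simp only [sum_const, nsmul_eq_mul, NNReal.coe_mul, NNReal.coe_natCast]
    congr 1
    push_cast
    ring
  have hsplit : {ω | t ≤ |∑ i ∈ s, (Y i ω - μ[Y i])|} ⊆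
      {ω | t ≤ ∑ i ∈ s, (Y i ω - μ[Y i])} ∪ {ω | t ≤ ∑ i ∈ s, -(Y i ω - μ[Y i])} := by
    intro ω hω
    rw [Set.mem_ofPred_eq, le_abs, ← sum_neg_distrib] at hω
    exact hω
  calc μ.real _ ≤ _ := (measureReal_mono hsplit).trans (measureReal_union_le _ _)
    _ ≤ exp (-2 * t ^ 2 / #s) + exp (-2 * t ^ 2 / #s) := by
      gcongr
      · exact htail hind_centered hsubG
      · exact htail (hind_centered.comp (fun _ x ↦ -x) fun _ ↦ measurable_neg)
          fun i ↦ (hsubG i).neg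
    _ = 2 * exp (-2 * t ^ 2 / #s) := by ring

end Hoeffding

section EmpiricalFrequency

variable {Ω ι α : Type*} [MeasurableSpace Ω] {μ : Measure Ω} [IsProbabilityMeasure μ]
  [Fintype ι] [MeasurableSpace α] [MeasurableSingletonClass α] [DecidableEq α]

lemma measureReal_le_abs_card_filter_div_sub_le [Nonempty ι] {X : ι → Ω → α}
    (hmeas : ∀ j, Measurable (X j)) (hind : iIndepFun X μ) {a : α} {q : ℝ}
    (hdist : ∀ j, μ.real {ω | X j ω = a} = q) {t : ℝ} (ht : 0 ≤ t) :
    μ.real {ω | t ≤ |(#{j | X j ω = a} : ℝ) / Fintype.card ι - q|}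
      ≤ 2 * exp (-2 * Fintype.card ι * t ^ 2) := by
  set n : ℝ := (Fintype.card ι : ℝ)
  have hn : 0 < n := by positivity
  set Y : ι → Ω → ℝ := fun j ↦ ({a} : Set α).indicator 1 ∘ X j
  have hY_int : ∀ j, μ[Y j] = q := fun j ↦ by
    rw [← hdist j]
    exact integral_indicator_one ((hmeas j) (measurableSet_singleton a))
  have hY_sum : ∀ ω, ∑ j, (Y j ω - μ[Y j]) = n * ((#{j | X j ω = a} : ℝ) / n - q) := fun ω ↦ by
    simp only [hY_int, sum_sub_distrib, sum_const, card_univ, nsmul_eq_mul]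
    rw [mul_sub, mul_div_cancel₀ _ hn.ne']
    simp only [Y, Function.comp_apply, Set.indicator_apply, Set.mem_singleton_iff, Pi.one_apply]
    rw [sum_boole]
  have hY_ind : iIndepFun Y μ := by
    have h := hind.comp (γ := fun _ ↦ ℝ) (fun _ ↦ ({a} : Set α).indicator 1)
      fun _ ↦ measurable_one.indicator (measurableSet_singleton a)
    exact h
  have hY_mem : ∀ j ω, Y j ω ∈ Set.Icc (0 : ℝ) 1 := fun j ω ↦ by
    by_cases h : X j ω = a <;> simp [Y, h]
  calc μ.real {ω | t ≤ |(#{j | X j ω = a} : ℝ) / n - q|}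
      = μ.real {ω | n * t ≤ |∑ j, (Y j ω - μ[Y j])|} := by
        simp only [hY_sum, abs_mul, abs_of_pos hn, mul_le_mul_iff_right₀ hn]
    _ ≤ 2 * exp (-2 * (n * t) ^ 2 / n) :=
        measureReal_le_abs_sum_sub_integral_le hY_ind
          (fun j ↦ measurable_one.indicator (measurableSet_singleton a) |>.comp (hmeas j))
          hY_mem univ (by positivity)
    _ = 2 * exp (-2 * n * t ^ 2) := by
        congr 2
        field_simp

end EmpiricalFrequency

lemma mul_two_mul_exp_le_of_le_mul_log {T N ε η : ℝ} (hT : 0 < T) (hε : 0 < ε) (hη : 0 < η)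
    (hN : 2 * T ^ 2 / ε ^ 2 * log (2 * T / η) ≤ N) :
    T * (2 * exp (-2 * N * (ε / (2 * T)) ^ 2)) ≤ η := by
  have hlog : log (2 * T / η) ≤ 2 * N * (ε / (2 * T)) ^ 2 := by
    calc log (2 * T / η) = 2 * T ^ 2 / ε ^ 2 * log (2 * T / η) * (ε ^ 2 / (2 * T ^ 2)) := by
          field_simp
      _ ≤ N * (ε ^ 2 / (2 * T ^ 2)) := by gcongr
      _ = 2 * N * (ε / (2 * T)) ^ 2 := by ring
  calc T * (2 * exp (-2 * N * (ε / (2 * T)) ^ 2))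
      ≤ T * (2 * exp (-log (2 * T / η))) := by gcongr; linarith
    _ = η := by
      rw [exp_neg, exp_log (by positivity)]
      field_simp

theorem empirical_l1_small_whp_general
    {Ω : Type*} [MeasurableSpace Ω] (μ : Measure Ω) [IsProbabilityMeasure μ]
    (T N : ℕ) (hT : 0 < T) (hN : 0 < N)
    (ε η : ℝ) (hε : 0 < ε) (hη : 0 < η)
    (p : Fin T → ℝ)
    (X : Fin N → Ω → Fin T)
    (hmeas : ∀ j, Measurable (X j))
    (hind : iIndepFun X μ)
    (hdist : ∀ j i, (μ {ω | X j ω = i}).toReal = p i)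
    (hbig : (2 * (T : ℝ) ^ 2 / ε ^ 2) * Real.log (2 * (T : ℝ) / η) ≤ (N : ℝ)) :
    (μ {ω | ε / 2 <
        ∑ i : Fin T,
          |((Finset.univ.filter fun j : Fin N => X j ω = i).card : ℝ) / (N : ℝ)
            - p i|}).toReal ≤ η := by
  have : NeZero N := ⟨hN.ne'⟩
  have hT' : (0 : ℝ) < T := by exact_mod_cast hT
  set δ := ε / (2 * T)
  have hcover : {ω | ε / 2 < ∑ i : Fin T, |(#{j | X j ω = i} : ℝ) / N - p i|}
      ⊆ ⋃ i, {ω | δ ≤ |(#{j | X j ω = i} : ℝ) / N - p i|} := fun ω hω ↦ by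
    have hδ_sum : ∑ _i : Fin T, δ = ε / 2 := by
      simp only [sum_const, card_univ, Fintype.card_fin, nsmul_eq_mul, δ]
      field_simp
    have hsum : ∑ _i : Fin T, δ < ∑ i, |(#{j | X j ω = i} : ℝ) / N - p i| := hδ_sum ▸ hω
    obtain ⟨i, -, hi⟩ := exists_lt_of_sum_lt hsum
    exact Set.mem_iUnion.2 ⟨i, hi.le⟩
  calc μ.real {ω | ε / 2 < ∑ i : Fin T, |(#{j | X j ω = i} : ℝ) / N - p i|}
      ≤ ∑ i : Fin T, μ.real {ω | δ ≤ |(#{j | X j ω = i} : ℝ) / N - p i|} :=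
        (measureReal_mono hcover).trans (measureReal_iUnion_fintype_le _)
    _ ≤ ∑ _i : Fin T, 2 * exp (-2 * N * δ ^ 2) := sum_le_sum fun i _ ↦ by
        simpa using measureReal_le_abs_card_filter_div_sub_le hmeas hind (hdist · i) (by positivity)
    _ = T * (2 * exp (-2 * N * δ ^ 2)) := by simp
    _ ≤ η := mul_two_mul_exp_le_of_le_mul_log hT' hε hη hbig

/-- Let `p` be a probability vector on `{1,…,T}` and `X_1,…,X_N`
i.i.d. samples from `p`, with empirical distribution `p̂`.  If
`N ≥ (2T²/ε²)·ln(2T/η)` with `ε, η ∈ (0,1)`, then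
`P[ ∑_i |p̂_i − p_i| > ε/2 ] ≤ η`. -/
theorem empirical_l1_small_whp
    {Ω : Type*} [MeasurableSpace Ω] (μ : Measure Ω) [IsProbabilityMeasure μ]
    (T N : ℕ) (hT : 0 < T) (hN : 0 < N)
    (ε η : ℝ) (hε : 0 < ε) (hε1 : ε < 1) (hη : 0 < η) (hη1 : η < 1)
    (p : Fin T → ℝ) (hp0 : ∀ i, 0 ≤ p i) (hp1 : ∑ i, p i = 1)
    (X : Fin N → Ω → Fin T)
    (hmeas : ∀ j, Measurable (X j))
    (hind : iIndepFun X μ)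
    (hdist : ∀ j i, (μ {ω | X j ω = i}).toReal = p i)
    (hbig : (2 * (T : ℝ) ^ 2 / ε ^ 2) * Real.log (2 * (T : ℝ) / η) ≤ (N : ℝ)) :
    (μ {ω | ε / 2 <
        ∑ i : Fin T,
          |((Finset.univ.filter fun j : Fin N => X j ω = i).card : ℝ) / (N : ℝ)
            - p i|}).toReal ≤ η :=
  empirical_l1_small_whp_general μ T N hT hN ε η hε hη p X hmeas hind hdist hbig
end
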